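/- arXiv:1303.1366 — 6 statements merged into one kernel-verified Lean document; each statement's English description precedes it below -/
import Mathlib

section
/- Fix an integer m ≥ 1, and let r : ℕ → ℕ be defined by r_0 = 1 and, for n ≥ 1, r_n = r_{n−1} + r_{n−m} where the term r_{n−m} is taken to be 0 when n < m (so that Σ_{n≥0} r_n x^n = 1/(1 − x − x^m)). Then for every n ≥ m + 1, r_{n−m−1} equals the sum, over all compositions (a_1, …, a_k) of n, of the products ⌊(a_1 − 1)/m⌋ ⌊(a_2 − 1)/m⌋ ⋯ ⌊(a_k − 1)/m⌋. -/
/-!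
Let `G = ∑ₙ (∑_{c ∈ C(n)} ∏ ⌊(aᵢ - 1)/m⌋) xⁿ`, `F = ∑ₐ ⌊(a - 1)/m⌋ xᵃ` and `H = ∑ₙ rₙ xⁿ`.
Splitting off the first block of a composition gives `G = 1 + F G`. Moreover
`(1 - x^m) F = x^(m+1)/(1 - x)` and `H (1 - x - x^m) = 1`, so `(1 - F)(1 - x)(1 - x^m) = 1 - x - x^m`
and hence `G = H (1 - x)(1 - x^m) = 1 + x^(m+1) H`.
-/

open PowerSeries

variable {R : Type*}

namespace Composition

def consEquiv (n : ℕ) : (Σ i : Fin (n + 1), Composition (n - i)) ≃ Composition (n + 1) where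
  toFun p :=
    { blocks := (p.1 + 1) :: p.2.blocks
      blocks_pos := by simpa using fun _ h => p.2.blocks_pos h
      blocks_sum := by simp [p.2.blocks_sum]; omega }
  invFun c :=
    have hc : c.blocks.head! :: c.blocks.tail = c.blocks :=
      List.cons_head!_tail (c.blocks_eq_nil.not.2 n.succ_ne_zero)
    have hsum := c.blocks_sum
    have hpos := c.one_le_blocks (hc ▸ List.mem_cons_self)
    ⟨⟨c.blocks.head! - 1, by rw [← hc, List.sum_cons] at hsum; omega⟩,
      { blocks := c.blocks.tail
        blocks_pos := fun h => c.blocks_pos (List.mem_of_mem_tail h)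
        blocks_sum := by rw [← hc, List.sum_cons] at hsum; simp; omega }⟩
  left_inv p := rfl
  right_inv c := by
    have hc : c.blocks.head! :: c.blocks.tail = c.blocks :=
      List.cons_head!_tail (c.blocks_eq_nil.not.2 n.succ_ne_zero)
    have hpos := c.one_le_blocks (hc ▸ List.mem_cons_self)
    ext1
    simp only
    rw [Nat.sub_add_cancel hpos, hc]

theorem sum_blocks_map_prod_succ [Semiring R] (w : ℕ → R) (n : ℕ) :
    ∑ c : Composition (n + 1), (c.blocks.map w).prod =
      ∑ i : Fin (n + 1), w (i + 1) * ∑ c : Composition (n - i), (c.blocks.map w).prod := by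
  rw [← (consEquiv n).sum_comp, Fintype.sum_sigma]
  simp only [Finset.mul_sum]
  rfl

end Composition

open Composition

def compositionSeries [Semiring R] (w : ℕ → R) : R⟦X⟧ :=
  mk fun n => ∑ c : Composition n, (c.blocks.map w).prod

theorem compositionSeries_eq_one_add_mul [Semiring R] {w : ℕ → R} (hw : w 0 = 0) :
    compositionSeries w = 1 + mk w * compositionSeries w := by
  ext (_ | n)
  · have hblocks (c : Composition 0) : (c.blocks.map w).prod = 1 := by
      rw [c.blocks_eq_nil.2 rfl, List.map_nil, List.prod_nil]
    simp [compositionSeries, hblocks, hw, composition_card]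
  · rw [compositionSeries, coeff_mk, sum_blocks_map_prod_succ, map_add, coeff_one,
      if_neg n.succ_ne_zero, zero_add, coeff_mul,
      Finset.Nat.sum_antidiagonal_eq_sum_range_succ_mk, Finset.sum_range_succ',
      ← Fin.sum_univ_eq_sum_range]
    simp [hw]

section Ring

variable [Ring R]

theorem one_sub_X_pow_mul_mk_div {m : ℕ} (hm : 0 < m) :
    (1 - X ^ m : R⟦X⟧) * mk (fun a => (((a - 1) / m : ℕ) : R)) = X ^ (m + 1) * mk 1 := by
  ext a
  rw [sub_mul, one_mul, map_sub, coeff_X_pow_mul', coeff_X_pow_mul', coeff_mk, coeff_mk]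
  obtain ha | ha := le_or_gt (m + 1) a
  · rw [if_pos (show m ≤ a by omega), if_pos ha,
      Nat.div_eq_sub_div hm (show m ≤ a - 1 by omega), Nat.sub_right_comm]
    simp
  · rw [if_neg (show ¬m + 1 ≤ a by omega), Nat.div_eq_of_lt (show a - 1 < m by omega)]
    split_ifs
    · simp [show a - m - 1 = 0 by omega]
    · simp

theorem mk_mul_one_sub_X_sub_X_pow {m : ℕ} (hm : 0 < m) {r : ℕ → ℕ} (hr0 : r 0 = 1)
    (hr : ∀ n, 1 ≤ n → r n = r (n - 1) + (if m ≤ n then r (n - m) else 0)) :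
    mk (fun n => (r n : R)) * (1 - X - X ^ m) = 1 := by
  ext n
  rw [mul_sub, mul_sub, mul_one, map_sub, map_sub, coeff_mul_X_pow', ← pow_one X,
    coeff_mul_X_pow', coeff_one, coeff_mk, coeff_mk]
  rcases Nat.eq_zero_or_pos n with rfl | hn
  · simp [hr0, hm.ne']
  · rw [hr n hn, if_pos (show 1 ≤ n from hn), if_neg hn.ne']
    split_ifs <;> simp

end Ring

theorem sum_over_compositions_floor_div_m
    (m : ℕ) (hm : 1 ≤ m) (r : ℕ → ℕ) (hr0 : r 0 = 1)
    (hr : ∀ n, 1 ≤ n → r n = r (n - 1) + (if m ≤ n then r (n - m) else 0))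
    (n : ℕ) (hn : m + 1 ≤ n) :
    r (n - m - 1) =
      ∑ c : Composition n, (c.blocks.map fun a => (a - 1) / m).prod := by
  set G : ℤ⟦X⟧ := compositionSeries fun a => (((a - 1) / m : ℕ) : ℤ)
  set F : ℤ⟦X⟧ := mk fun a => (((a - 1) / m : ℕ) : ℤ)
  set H : ℤ⟦X⟧ := mk fun n => (r n : ℤ)
  have hG : G = 1 + F * G := compositionSeries_eq_one_add_mul (by simp)
  have hF : (1 - X ^ m) * F = X ^ (m + 1) * mk 1 := one_sub_X_pow_mul_mk_div hm
  have hH : H * (1 - X - X ^ m) = 1 := mk_mul_one_sub_X_sub_X_pow hm hr0 hr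
  have key : G = 1 + X ^ (m + 1) * H := by
    linear_combination (H * (1 - X) * (1 - X ^ m)) * hG + (1 - G) * hH
      + (H * G * (1 - X)) * hF + (H * G * X ^ (m + 1)) * mk_one_mul_one_sub_eq_one (S := ℤ)
  have := congrArg (coeff n) key
  rw [map_add, coeff_one, coeff_X_pow_mul', if_neg (by omega), if_pos hn, zero_add] at this
  simp only [G, H, compositionSeries, coeff_mk] at this
  rw [Nat.sub_sub]
  apply Nat.cast_injective (R := ℤ)
  push_cast [Nat.cast_list_prod, List.map_map]
  exact this.symm
end

section
/- For every integer m ≥ 1, the following identity holds in ℤ⟦X⟧: (Σ_{n≥0} g_n X^n) · ((1 − F_{m−1}·X)·(1 − F_{m+1}·X) − F_m²·X²) = 1 − F_{m+1}·X, where g_0 = 1 and g_n = F_{mn−1} for n ≥ 1. (Equivalently, 1 + Σ_{n≥1} F_{mn−1} x^n = (1 − F_{m−1}x − F_m² x²/(1 − F_{m+1}x))^{−1}.) -/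
/-!
The sequence `n ↦ F_{mn-1}` satisfies the linear recurrence
`a_{n+2} = (F_{m-1} + F_{m+1}) a_{n+1} - (F_{m-1} F_{m+1} - F_m²) a_n`, a consequence of the
addition formula for Fibonacci numbers, and the quadratic factor in the statement is exactly
`1 - (F_{m-1} + F_{m+1}) X + (F_{m-1} F_{m+1} - F_m²) X²`. Multiplying the generating function
of such a sequence by this polynomial kills every coefficient beyond the first two. With
Fibonacci numbers extended to negative indices, `F_{-1} = 1 = g_0`, so the recurrence holds
from `n = 0` on.
-/

open PowerSeries

theorem Int.fib_add_two_mul (k m : ℤ) :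
    fib (k + 2 * m) =
      (fib (m - 1) + fib (m + 1)) * fib (k + m)
        - (fib (m - 1) * fib (m + 1) - fib m ^ 2) * fib k := by
  have h₁ := fib_add (k + m) m
  have h₂ := fib_add k m
  have h₃ := fib_add k (m - 1)
  rw [show k + m - 1 = k + (m - 1) by ring, h₃, sub_add_cancel] at h₁
  rw [show k + 2 * m = k + m + m by ring, h₁, h₂]
  ring

theorem PowerSeries.mk_mul_eq_of_linearRecurrence {R : Type*} [CommRing R] (a : ℕ → R) (s t : R)
    (h : ∀ n, a (n + 2) = s * a (n + 1) - t * a n) :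
    mk a * (1 - C s * X + C t * X ^ 2) = C (a 0) + C (a 1 - s * a 0) * X := by
  rw [show mk a * (1 - C s * X + C t * X ^ 2) = mk a - C s * (mk a * X) + C t * (mk a * X * X) by
    ring]
  ext (_ | _ | n) <;> simp [coeff_succ_mul_X, h]

theorem fib_multisection_gf_m_m2 (m : ℕ) (hm : 1 ≤ m) (g : ℕ → ℤ)
    (hg0 : g 0 = 1) (hg : ∀ n, 1 ≤ n → g n = Nat.fib (m * n - 1)) :
    (PowerSeries.mk g) *
        ((1 - C (R := ℤ) (Nat.fib (m - 1)) * X) * (1 - C (R := ℤ) (Nat.fib (m + 1)) * X) -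
          C (R := ℤ) ((Nat.fib m : ℤ) ^ 2) * X ^ 2) =
      1 - C (R := ℤ) (Nat.fib (m + 1)) * X := by
  have hfib_pred : (Nat.fib (m - 1) : ℤ) = Int.fib (m - 1) := by
    rw [← Int.fib_natCast, Nat.cast_sub hm, Nat.cast_one]
  have hfib_succ : (Nat.fib (m + 1) : ℤ) = Int.fib (m + 1) := by
    rw [← Int.fib_natCast, Nat.cast_succ]
  have hg_fib : ∀ n, g n = Int.fib (m * n - 1) := by
    rintro (_ | n)
    · simp [hg0]
    · rw [hg _ n.succ_pos, ← Int.fib_natCast, Nat.cast_sub (Nat.mul_pos hm n.succ_pos)]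
      push_cast; rfl
  have hrec : ∀ n, g (n + 2) = (Int.fib (m - 1) + Int.fib (m + 1)) * g (n + 1)
      - (Int.fib (m - 1) * Int.fib (m + 1) - Int.fib m ^ 2) * g n := by
    intro n
    rw [hg_fib, hg_fib, hg_fib,
      show (m : ℤ) * (n + 2 : ℕ) - 1 = (m * n - 1) + 2 * m by push_cast; ring,
      show (m : ℤ) * (n + 1 : ℕ) - 1 = (m * n - 1) + m by push_cast; ring]
    exact Int.fib_add_two_mul _ _
  have hQ : (1 - C (R := ℤ) (Nat.fib (m - 1)) * X) * (1 - C (R := ℤ) (Nat.fib (m + 1)) * X) -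
      C (R := ℤ) ((Nat.fib m : ℤ) ^ 2) * X ^ 2 = 1 - C (Int.fib (m - 1) + Int.fib (m + 1)) * X
        + C (Int.fib (m - 1) * Int.fib (m + 1) - Int.fib m ^ 2) * X ^ 2 := by
    simp only [hfib_pred, hfib_succ, map_add, map_sub, map_mul, map_pow, Int.fib_natCast]
    ring
  rw [hQ, mk_mul_eq_of_linearRecurrence g _ _ hrec, hg_fib, hg_fib, hfib_succ]
  simp [sub_eq_add_neg]
end

section
/- Let m ≥ 1 and 0 ≤ j ≤ m be integers. Then the following identity holds in ℤ⟦X⟧: (Σ_{n≥0} F_{mn+j} X^n) · (1 − L_m·X + (−1)^m·X²) = F_j + (−1)^j·F_{m−j}·X. -/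
/-!
A sequence with `u (n + 2) = p * u (n + 1) - q * u n` has generating function whose product with
`1 - p X + q X²` is linear. The subsequence `F (m n + j)` is such a sequence with `p = L m` and
`q = (-1) ^ m`, by the identity `L m * F n = F (n + m) + (-1) ^ m * F (n - m)`. Extended to
negative indices through `Int.fib`, this identity holds for every integer `n` and follows by
two-step induction on `m`; at `n = j` it also yields the linear coefficient, via
`F (j - m) = (-1) ^ (m - j + 1) * F (m - j)`.
-/

open PowerSeries

/-- The Lucas numbers: `L 0 = 2`, `L 1 = 1`, `L (n+2) = L (n+1) + L n`. -/
def lucas : ℕ → ℕ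
  | 0 => 2
  | 1 => 1
  | n + 2 => lucas (n + 1) + lucas n

theorem PowerSeries.mk_mul_eq_of_recurrence {R : Type*} [CommRing R] (u : ℕ → R) (p q : R)
    (h : ∀ n, u (n + 2) = p * u (n + 1) - q * u n) :
    mk u * (1 - C p * X + C q * X ^ 2) = C (u 0) + C (u 1 - p * u 0) * X := by
  rw [show mk u * (1 - C p * X + C q * X ^ 2) = mk u - C p * (mk u * X) + C q * (mk u * X * X)
    by ring]
  ext (_ | _ | n)
  · simp
  · simp [coeff_succ_mul_X]
  · simp [coeff_succ_mul_X, h]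

theorem lucas_mul_intFib (m : ℕ) (n : ℤ) :
    (lucas m : ℤ) * Int.fib n = Int.fib (n + m) + (-1) ^ m * Int.fib (n - m) := by
  induction m using Nat.twoStepInduction generalizing n with
  | zero => simp [lucas]; ring
  | one =>
    rw [show n + (1 : ℕ) = n - 1 + 2 by push_cast; ring, Int.fib_add_two, sub_add_cancel]
    simp [lucas]
  | more m ih₀ ih₁ =>
    have hadd : Int.fib (n + (m + 2)) = Int.fib (n + m) + Int.fib (n + (m + 1)) := by
      rw [← add_assoc, Int.fib_add_two, add_assoc]
    have hsub : Int.fib (n - (m + 2)) = Int.fib (n - m) - Int.fib (n - (m + 1)) := by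
      rw [Int.fib_eq_fib_add_two_sub_fib_add_one]
      ring_nf
    simp only [lucas, Nat.cast_add, add_mul, ih₀, ih₁]
    push_cast
    rw [hadd, hsub]
    ring

theorem lucas_mul_fib_of_le {j m : ℕ} (h : j ≤ m) :
    (lucas m : ℤ) * Nat.fib j = Nat.fib (m + j) - (-1) ^ j * Nat.fib (m - j) := by
  obtain ⟨d, rfl⟩ := Nat.exists_eq_add_of_le h
  have hL := lucas_mul_intFib (j + d) j
  rw [show (j : ℤ) - (j + d : ℕ) = -(d : ℕ) by push_cast; ring, Int.fib_neg_natCast] at hL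
  have hsq : ((-1 : ℤ) ^ d) ^ 2 = 1 := by rw [← pow_mul, mul_comm, pow_mul]; norm_num
  simp only [Nat.add_sub_cancel_left, Int.fib_natCast, ← Nat.cast_add] at hL ⊢
  rw [hL, add_comm j (j + d)]
  linear_combination -(-1) ^ j * Nat.fib d * hsq

theorem fib_mul_add_two_add (m j k : ℕ) :
    (Nat.fib (m * (k + 2) + j) : ℤ) =
      lucas m * Nat.fib (m * (k + 1) + j) - (-1) ^ m * Nat.fib (m * k + j) := by
  have hL := lucas_mul_intFib m (m * (k + 1) + j : ℕ)
  rw [show ((m * (k + 1) + j : ℕ) : ℤ) + m = (m * (k + 2) + j : ℕ) by push_cast; ring,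
    show ((m * (k + 1) + j : ℕ) : ℤ) - m = (m * k + j : ℕ) by push_cast; ring] at hL
  simp only [Int.fib_natCast] at hL
  linear_combination -hL

theorem fib_multisection_gf_general (m j : ℕ) (hj : j ≤ m) :
    (PowerSeries.mk fun n => (Nat.fib (m * n + j) : ℤ)) *
        (1 - C (R := ℤ) (lucas m) * X + C (R := ℤ) ((-1) ^ m) * X ^ 2) =
      C (R := ℤ) (Nat.fib j) + C (R := ℤ) ((-1) ^ j * Nat.fib (m - j)) * X := by
  rw [mk_mul_eq_of_recurrence _ _ _ (fib_mul_add_two_add m j)]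
  simp only [mul_zero, zero_add, mul_one, lucas_mul_fib_of_le hj, sub_sub_cancel]

theorem fib_multisection_gf (m j : ℕ) (hm : 1 ≤ m) (hj : j ≤ m) :
    (PowerSeries.mk fun n => (Nat.fib (m * n + j) : ℤ)) *
        (1 - C (R := ℤ) (lucas m) * X + C (R := ℤ) ((-1) ^ m) * X ^ 2) =
      C (R := ℤ) (Nat.fib j) + C (R := ℤ) ((-1) ^ j * Nat.fib (m - j)) * X :=
  fib_multisection_gf_general m j hj
end

section
/- For every integer n ≥ 1, F_{2n} equals the sum, over all compositions (a_1, …, a_k) of n, of the products a_1 a_2 ⋯ a_k. -/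
/-!
A composition of `n + 2` either starts with a block `1`, which can be removed, or with a larger
block, which can be decremented; both operations land in compositions of `n + 1`. Writing `S n`
for the sum of the products of the blocks and `T n` for the same sum with the first block
dropped, this gives `S (n + 2) = 2 S (n + 1) + T (n + 1)` and `T (n + 2) = S (n + 1) + T (n + 1)`,
which is the recursion satisfied by `(F (2n + 2), F (2n + 1))`.
-/

namespace Composition

variable {n : ℕ}

lemma exists_blocks_eq_cons (c : Composition (n + 1)) : ∃ a t, c.blocks = a :: t :=
  List.exists_cons_of_ne_nil (c.blocks_eq_nil.not.2 n.succ_ne_zero)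

lemma blocks_of_one (c : Composition 1) : c.blocks = [1] := by
  rw [eq_ones_iff_le_length.2 (c.length_pos_iff.2 one_pos), ones_blocks, List.replicate_one]

def consOne (c : Composition n) : Composition (n + 1) where
  blocks := 1 :: c.blocks
  blocks_pos := by simpa using fun _ => c.blocks_pos
  blocks_sum := by simp [c.blocks_sum, add_comm]

def succHead (c : Composition (n + 1)) : Composition (n + 2) where
  blocks := c.blocks.modifyHead (· + 1)
  blocks_pos := by
    obtain ⟨a, t, h⟩ := c.exists_blocks_eq_cons
    have := fun i => @blocks_pos _ c i
    simp_all
  blocks_sum := by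
    obtain ⟨a, t, h⟩ := c.exists_blocks_eq_cons
    have := c.blocks_sum
    simp only [h, List.modifyHead_cons, List.sum_cons] at this ⊢
    omega

@[simp] lemma consOne_blocks (c : Composition n) : c.consOne.blocks = 1 :: c.blocks := rfl

@[simp] lemma succHead_blocks (c : Composition (n + 1)) :
    c.succHead.blocks = c.blocks.modifyHead (· + 1) := rfl

lemma prod_succHead_blocks (c : Composition (n + 1)) :
    c.succHead.blocks.prod = c.blocks.prod + c.blocks.tail.prod := by
  obtain ⟨a, t, h⟩ := c.exists_blocks_eq_cons
  simp [h, add_mul]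

lemma consOne_injective : Function.Injective (consOne : Composition n → _) := fun c d h =>
  Composition.ext (by simpa using congrArg (·.blocks) h)

lemma succHead_injective : Function.Injective (succHead : Composition (n + 1) → _) := by
  intro c d h
  obtain ⟨a, t, hc⟩ := c.exists_blocks_eq_cons
  obtain ⟨b, s, hd⟩ := d.exists_blocks_eq_cons
  ext1
  simpa [hc, hd] using congrArg (·.blocks) h

lemma consOne_ne_succHead (c d : Composition (n + 1)) : c.consOne ≠ d.succHead := by
  obtain ⟨a, t, h⟩ := d.exists_blocks_eq_cons
  have := d.one_le_blocks (h ▸ List.mem_cons_self)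
  intro he
  have := congrArg (·.blocks.head?) he
  simp [h] at this
  omega

lemma surjective_sumElim_consOne_succHead :
    Function.Surjective (Sum.elim consOne succHead : Composition (n + 1) ⊕ _ → _) := by
  intro d
  obtain ⟨a, t, h⟩ := d.exists_blocks_eq_cons
  have h1a : 1 ≤ a := d.one_le_blocks (h ▸ List.mem_cons_self)
  have ht : ∀ i ∈ t, 0 < i := fun i hi => d.blocks_pos (h ▸ List.mem_cons_of_mem a hi)
  have hs := d.blocks_sum
  rw [h, List.sum_cons] at hs
  obtain rfl | ha := h1a.eq_or_lt
  · exact ⟨.inl ⟨t, ht _, by omega⟩, Composition.ext h.symm⟩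
  · refine ⟨.inr ⟨(a - 1) :: t, ?_, by simp only [List.sum_cons]; omega⟩, Composition.ext ?_⟩
    · simp only [List.mem_cons]
      rintro i (rfl | hi)
      exacts [by omega, ht i hi]
    · show ((a - 1) :: t).modifyHead (· + 1) = d.blocks
      rw [h, List.modifyHead_cons, Nat.sub_add_cancel ha.le]

lemma sum_succ_succ {M : Type*} [AddCommMonoid M] (f : Composition (n + 2) → M) :
    ∑ d, f d = ∑ c : Composition (n + 1), f c.consOne + ∑ c : Composition (n + 1), f c.succHead := by
  have hbij : Function.Bijective (Sum.elim consOne succHead : Composition (n + 1) ⊕ _ → _) :=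
    ⟨consOne_injective.sumElim succHead_injective consOne_ne_succHead,
      surjective_sumElim_consOne_succHead⟩
  rw [← Fintype.sum_bijective _ hbij _ f fun _ => rfl, Fintype.sum_sum_type]
  rfl

lemma sum_prod_blocks_succ_succ :
    ∑ d : Composition (n + 2), d.blocks.prod =
      2 * ∑ c : Composition (n + 1), c.blocks.prod +
        ∑ c : Composition (n + 1), c.blocks.tail.prod := by
  simp only [sum_succ_succ, consOne_blocks, List.prod_cons, one_mul, prod_succHead_blocks,
    Finset.sum_add_distrib]
  ring

lemma sum_prod_tail_blocks_succ_succ :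
    ∑ d : Composition (n + 2), d.blocks.tail.prod =
      ∑ c : Composition (n + 1), c.blocks.prod + ∑ c : Composition (n + 1), c.blocks.tail.prod := by
  simp [sum_succ_succ]

theorem sum_prod_blocks_and_tail_eq_fib (n : ℕ) :
    ∑ c : Composition (n + 1), c.blocks.prod = Nat.fib (2 * n + 2) ∧
      ∑ c : Composition (n + 1), c.blocks.tail.prod = Nat.fib (2 * n + 1) := by
  induction n with
  | zero => simp [blocks_of_one, composition_card]
  | succ n ih =>
    rw [sum_prod_blocks_succ_succ, sum_prod_tail_blocks_succ_succ, ih.1, ih.2,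
      show 2 * (n + 1) + 2 = 2 * n + 2 + 2 by ring, show 2 * (n + 1) + 1 = 2 * n + 1 + 2 by ring]
    simp only [Nat.fib_add_two]
    constructor <;> ring

end Composition

theorem fib_two_mul_eq_sum_compositions_prod (n : ℕ) (hn : 1 ≤ n) :
    Nat.fib (2 * n) = ∑ c : Composition n, c.blocks.prod := by
  obtain ⟨m, rfl⟩ := Nat.exists_eq_add_of_le' hn
  exact (Composition.sum_prod_blocks_and_tail_eq_fib m).1.symm
end

section
/- For every integer n ≥ 1, F_{2n−2} equals the sum, over all compositions (a_1, …, a_k) of n, of the products (2^{a_1−1} − 1)(2^{a_2−1} − 1) ⋯ (2^{a_k−1} − 1). -/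
/-!
Removing the first block of a composition shows that the weighted sums
`S n = ∑_{c ⊨ n} ∏ f(a_i)` satisfy `S 0 = 1` and `S (n + 1) = ∑_{i + j = n} f (i + 1) S j`.
For `f a = 2^(a-1) - 1` the sequence `1, F₀, F₂, F₄, …` obeys the same recurrence, because
`∑_{i + j = n} (2^i - 1) F_{2j} + 2^(n+1) = F_{2n+2} + 1`: doubling `2^i - 1` and adding one
turns the sum for `n` into the sum for `n + 1`, and the leftover
`∑_{j ≤ n} F_{2j} = F_{2n+1} - 1` is the classical sum of even-indexed Fibonacci numbers.
-/

open Finset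

namespace Composition

def cons {n : ℕ} (i : Fin (n + 1)) (c : Composition (n - i)) : Composition (n + 1) where
  blocks := (i + 1) :: c.blocks
  blocks_pos := by
    rintro b (_ | ⟨_, hb⟩)
    exacts [Nat.succ_pos _, c.blocks_pos hb]
  blocks_sum := by simp only [List.sum_cons, c.blocks_sum]; omega

def firstBlockEquiv (n : ℕ) :
    (Σ i : Fin (n + 1), Composition (n - i)) ≃ Composition (n + 1) where
  toFun p := cons p.1 p.2
  invFun
    | ⟨b :: l, hpos, hsum⟩ =>
      have hb : 0 < b := hpos List.mem_cons_self
      ⟨⟨b - 1, by simp only [List.sum_cons] at hsum; omega⟩,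
        ⟨l, fun h => hpos (List.mem_cons_of_mem b h),
          by simp only [List.sum_cons] at hsum ⊢; omega⟩⟩
    | ⟨[], _, hsum⟩ => absurd hsum (by simp)
  left_inv := by
    rintro ⟨i, c⟩
    rfl
  right_inv := by
    rintro ⟨_ | ⟨b, l⟩, hpos, hsum⟩
    · simp at hsum
    · have hb : 0 < b := hpos List.mem_cons_self
      ext1
      simp only [cons, List.cons.injEq, and_true]
      omega

instance : Unique (Composition 0) where
  default := ones 0
  uniq c := Composition.ext <| by simp [blocks_eq_nil]

variable {R : Type*} [CommSemiring R] (f : ℕ → R)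

theorem sum_prod_map_blocks_zero : ∑ c : Composition 0, (c.blocks.map f).prod = 1 := by
  rw [Fintype.sum_unique]; rfl

theorem sum_prod_map_blocks_succ (n : ℕ) :
    ∑ c : Composition (n + 1), (c.blocks.map f).prod =
      ∑ p ∈ antidiagonal n, f (p.1 + 1) * ∑ c : Composition p.2, (c.blocks.map f).prod := by
  have prod_cons (i : Fin (n + 1)) (c : Composition (n - i)) :
      ((cons i c).blocks.map f).prod = f (i + 1) * (c.blocks.map f).prod := by
    simp [cons]
  rw [← (firstBlockEquiv n).sum_comp, Fintype.sum_sigma]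
  simp only [firstBlockEquiv, Equiv.coe_fn_mk, prod_cons, ← mul_sum]
  rw [Fin.sum_univ_eq_sum_range
      (fun i => f (i + 1) * ∑ c : Composition (n - i), (c.blocks.map f).prod),
    Finset.Nat.sum_antidiagonal_eq_sum_range_succ_mk]

end Composition

namespace Nat

theorem sum_antidiagonal_fib_two_mul_add_one (n : ℕ) :
    ∑ p ∈ antidiagonal n, fib (2 * p.2) + 1 = fib (2 * n + 1) := by
  induction n with
  | zero => rfl
  | succ n ih =>
    rw [Finset.Nat.sum_antidiagonal_succ, add_assoc, ih,
      show 2 * (n + 1) + 1 = 2 * n + 1 + 2 by ring, fib_add_two, add_comm]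
    rfl

theorem sum_antidiagonal_two_pow_sub_one_mul_fib_two_mul (n : ℕ) :
    ∑ p ∈ antidiagonal n, (2 ^ p.1 - 1) * fib (2 * p.2) + 2 ^ (n + 1) =
      fib (2 * n + 2) + 1 := by
  induction n with
  | zero => rfl
  | succ n ih =>
    have two_pow_succ_sub_one (i : ℕ) : 2 ^ (i + 1) - 1 = 2 * (2 ^ i - 1) + 1 := by
      have := Nat.one_le_two_pow (n := i)
      rw [pow_succ]; omega
    have hodd := sum_antidiagonal_fib_two_mul_add_one n
    have hfib₃ : fib (2 * n + 3) = fib (2 * n + 1) + fib (2 * n + 2) := fib_add_two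
    have hfib₄ : fib (2 * n + 4) = fib (2 * n + 2) + fib (2 * n + 3) := fib_add_two
    rw [Finset.Nat.sum_antidiagonal_succ]
    simp only [pow_zero, Nat.sub_self, zero_mul, zero_add, two_pow_succ_sub_one, add_mul,
      one_mul, mul_assoc, sum_add_distrib, ← mul_sum]
    rw [show 2 * (n + 1) + 2 = 2 * n + 4 by ring, pow_succ]
    omega

end Nat

theorem sum_compositions_succ_eq_fib (n : ℕ) :
    ∑ c : Composition (n + 1), (c.blocks.map fun a => 2 ^ (a - 1) - 1).prod =
      Nat.fib (2 * n) := by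
  induction n using Nat.strong_induction_on with
  | _ n ih =>
    rw [Composition.sum_prod_map_blocks_succ]
    cases n with
    | zero => simp
    | succ m =>
      have hterm : ∀ p ∈ antidiagonal m, (2 ^ (p.1 + 1 - 1) - 1) *
          ∑ c : Composition (p.2 + 1), (c.blocks.map fun a => 2 ^ (a - 1) - 1).prod =
          (2 ^ p.1 - 1) * Nat.fib (2 * p.2) := by
        intro p hp
        rw [ih p.2 (Finset.Nat.antidiagonal.snd_lt hp), Nat.add_sub_cancel]
      rw [Finset.Nat.sum_antidiagonal_succ', Composition.sum_prod_map_blocks_zero,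
        sum_congr rfl hterm, show 2 * (m + 1) = 2 * m + 2 by ring]
      simp only [Nat.add_sub_cancel, mul_one]
      have hfib := Nat.sum_antidiagonal_two_pow_sub_one_mul_fib_two_mul m
      have hpow := Nat.one_le_two_pow (n := m + 1)
      omega

theorem fib_two_mul_sub_two_eq_sum_compositions (n : ℕ) (hn : 1 ≤ n) :
    Nat.fib (2 * n - 2) =
      ∑ c : Composition n, (c.blocks.map fun a => 2 ^ (a - 1) - 1).prod := by
  obtain ⟨m, rfl⟩ := Nat.exists_eq_add_of_le' hn
  rw [sum_compositions_succ_eq_fib, show 2 * (m + 1) - 2 = 2 * m by omega]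
end

section
/- For every integer n ≥ 2, F_{n−2} equals the sum, over all compositions (a_1, …, a_k) of n, of the products ⌊(a_1 − 1)/2⌋ ⌊(a_2 − 1)/2⌋ ⋯ ⌊(a_k − 1)/2⌋. -/
/-!
Splitting off the first block shows that `W n = ∑ c : Composition n, ∏ᵢ (aᵢ - 1) / 2` satisfies
`W (n + 1) = ∑_{a + b = n} (a / 2) * W b`. As `(a + 2) / 2 = a / 2 + 1`, this gives
`W (n + 3) = W (n + 1) + (W 0 + ⋯ + W n)`, and comparing two consecutive instances yields the
Fibonacci recurrence `W (n + 4) = W (n + 3) + W (n + 2)`, started by `W 2 = 0` and `W 3 = 1`.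
-/

open Finset

namespace Composition

variable {n : ℕ}

theorem blocks_ne_nil (c : Composition (n + 1)) : c.blocks ≠ [] :=
  c.blocks_eq_nil.not.mpr n.succ_ne_zero

theorem head_add_sum_tail (c : Composition n) (h : c.blocks ≠ []) :
    c.blocks.head h + c.blocks.tail.sum = n := by
  rw [← List.sum_cons, List.cons_head_tail, c.blocks_sum]

/-- Splitting off the first block, which is recorded as `a + 1`. -/
def headTailEquiv (n : ℕ) : Composition (n + 1) ≃ Σ a : Fin (n + 1), Composition (n - a) where
  toFun c :=
    have hsum := c.head_add_sum_tail c.blocks_ne_nil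
    have hpos := c.blocks_pos (List.head_mem c.blocks_ne_nil)
    ⟨⟨c.blocks.head c.blocks_ne_nil - 1, by omega⟩,
      ⟨c.blocks.tail, fun hi => c.blocks_pos (List.mem_of_mem_tail hi), by dsimp only; omega⟩⟩
  invFun p :=
    ⟨(p.1 + 1) :: p.2.blocks, by
      rintro i (_ | ⟨_, hi⟩)
      exacts [Nat.succ_pos _, p.2.blocks_pos hi], by
      simp only [List.sum_cons, blocks_sum]; omega⟩
  left_inv c := by
    ext1
    dsimp only
    rw [Nat.sub_add_cancel (c.blocks_pos (List.head_mem c.blocks_ne_nil)), List.cons_head_tail]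
  right_inv _ := rfl

end Composition

section Weight

variable {M : Type*} [Semiring M]

def compositionWeight (f : ℕ → M) (n : ℕ) : M :=
  ∑ c : Composition n, (c.blocks.map f).prod

theorem compositionWeight_zero (f : ℕ → M) : compositionWeight f 0 = 1 := by
  rw [compositionWeight, Fintype.sum_eq_single (Composition.ones 0)]
  · simp
  · intro c hc
    exact absurd (Composition.ext (by simp [Composition.blocks_eq_nil])) hc

theorem compositionWeight_succ (f : ℕ → M) (n : ℕ) :
    compositionWeight f (n + 1) =
      ∑ p ∈ antidiagonal n, f (p.1 + 1) * compositionWeight f p.2 := by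
  rw [compositionWeight, ← (Composition.headTailEquiv n).symm.sum_comp, Fintype.sum_sigma,
    Nat.sum_antidiagonal_eq_sum_range_succ_mk, ← Fin.sum_univ_eq_sum_range]
  exact Fintype.sum_congr _ _ fun a => by
    rw [compositionWeight, mul_sum]
    exact Fintype.sum_congr _ _ fun c => List.prod_cons

end Weight

theorem compositionWeight_add_three (n : ℕ) :
    compositionWeight (fun a => (a - 1) / 2) (n + 3) =
      compositionWeight (fun a => (a - 1) / 2) (n + 1) +
        ∑ p ∈ antidiagonal n, compositionWeight (fun a => (a - 1) / 2) p.2 := by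
  have key : ∀ a, (a + 1 + 1) / 2 = a / 2 + 1 := by omega
  rw [compositionWeight_succ _ (n + 2), Nat.sum_antidiagonal_succ, Nat.sum_antidiagonal_succ,
    compositionWeight_succ _ n]
  simp [key, add_mul, sum_add_distrib]

theorem compositionWeight_add_four (n : ℕ) :
    compositionWeight (fun a => (a - 1) / 2) (n + 4) =
      compositionWeight (fun a => (a - 1) / 2) (n + 3) +
        compositionWeight (fun a => (a - 1) / 2) (n + 2) := by
  rw [compositionWeight_add_three (n + 1), Nat.sum_antidiagonal_succ, compositionWeight_add_three]
  ring

theorem fib_eq_compositionWeight (n : ℕ) :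
    Nat.fib n = compositionWeight (fun a => (a - 1) / 2) (n + 2) := by
  induction n using Nat.twoStepInduction with
  | zero => simp [compositionWeight_succ, compositionWeight_zero, Nat.sum_antidiagonal_succ]
  | one => simp [compositionWeight_succ, compositionWeight_zero, Nat.sum_antidiagonal_succ]
  | more n ih₀ ih₁ => rw [Nat.fib_add_two, ih₀, ih₁, compositionWeight_add_four, add_comm]

theorem fib_sub_two_eq_sum_compositions_floor (n : ℕ) (hn : 2 ≤ n) :
    Nat.fib (n - 2) =
      ∑ c : Composition n, (c.blocks.map fun a => (a - 1) / 2).prod := by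
  obtain ⟨m, rfl⟩ := Nat.exists_eq_add_of_le' hn
  exact fib_eq_compositionWeight m
end
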